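/- arXiv:math/0610829 — 4 statements merged into one kernel-verified Lean document; each statement's English description precedes it below -/
import Mathlib

section
/- For $d \geq 2$, a stacked $d$-sphere is uniquely determined by its edge graph: if $X$ and $Y$ are stacked $d$-spheres and there is a graph isomorphism between the edge graph of $X$ and the edge graph of $Y$, then $X$ and $Y$ are isomorphic as simplicial complexes. -/
/-!
In a stacked `d`-sphere every vertex has degree at least `d + 1`, and the vertex starred last has
degree exactly `d + 1`, its neighbours being the facet it was starred into. Conversely, once there
are more than `d + 2` vertices, any vertex `v` of degree `d + 1` can be taken to be the one starred
last: later starrings go into facets avoiding `v` and commute with the starring of `v`, and if `v`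
belongs to the initial standard sphere, the boundary of the bipyramid over the first facet is
symmetric in its two apexes. For `d ≥ 2`, starring changes no edge among the old vertices, so an
isomorphism of edge graphs carries such a `v` and its neighbourhood in `X` to a vertex of degree
`d + 1` and its neighbourhood in `Y`; unstarring both reduces to smaller stacked spheres, and
finally to standard spheres, which are determined by their vertex sets.
-/

open Finset

noncomputable section

attribute [local instance] Classical.propDecidable

variable {V : Type} [DecidableEq V]

/-- A (finite abstract) simplicial complex: a finite family of nonempty finite sets (faces)
closed under taking nonempty subsets. -/
def IsComplex (K : Finset (Finset V)) : Prop :=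
  (∀ s ∈ K, s.Nonempty) ∧ ∀ s ∈ K, ∀ t ⊆ s, t.Nonempty → t ∈ K

/-- The vertex set of a complex: the union of its faces. -/
def vertexSet (K : Finset (Finset V)) : Finset V := K.sup id

/-- A facet is a maximal face. -/
def IsFacet (K : Finset (Finset V)) (s : Finset V) : Prop :=
  s ∈ K ∧ ∀ t ∈ K, s ⊆ t → s = t

/-- A complex is pure of dimension `d` if it is nonempty and every facet has `d + 1` vertices. -/
def IsPure (K : Finset (Finset V)) (d : ℕ) : Prop :=
  K.Nonempty ∧ ∀ s, IsFacet K s → s.card = d + 1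

/-- The edge graph (1-skeleton) of a complex. -/
def edgeGraph (K : Finset (Finset V)) : SimpleGraph V where
  Adj x y := x ≠ y ∧ ({x, y} : Finset V) ∈ K
  symm := by
    constructor
    intro x y h
    refine ⟨h.1.symm, ?_⟩
    rw [Finset.pair_comm]
    exact h.2
  loopless := by
    constructor
    intro x h
    exact h.1 rfl

/-- A complex is connected if it has a vertex and any two of its vertices are joined by a
path in its edge graph. -/
def CConnected (K : Finset (Finset V)) : Prop :=
  (vertexSet K).Nonempty ∧
    ∀ u ∈ vertexSet K, ∀ v ∈ vertexSet K, (edgeGraph K).Reachable u v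

/-- The link of a face `α`: all faces `β` disjoint from `α` with `α ∪ β` a face. -/
def link (K : Finset (Finset V)) (α : Finset V) : Finset (Finset V) :=
  K.filter fun β => Disjoint α β ∧ α ∪ β ∈ K

/-- The number of edges (1-dimensional faces) of a complex. -/
def edgeCount (K : Finset (Finset V)) : ℕ := (K.filter fun s => s.card = 2).card

/-- A weak pseudomanifold of dimension `d`: a pure `d`-dimensional complex in which every
`(d-1)`-dimensional face lies in exactly two facets. -/
def IsWeakPM (K : Finset (Finset V)) (d : ℕ) : Prop :=
  IsComplex K ∧ IsPure K d ∧
    ∀ s ∈ K, s.card = d → (K.filter fun t => IsFacet K t ∧ s ⊆ t).card = 2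

/-- A normal `d`-pseudomanifold: a connected weak pseudomanifold of dimension `d` in which
the link of every face of dimension at most `d - 2` is connected. -/
def IsNormalPM (K : Finset (Finset V)) (d : ℕ) : Prop :=
  IsWeakPM K d ∧ CConnected K ∧
    ∀ s ∈ K, s.card ≤ d - 1 → CConnected (link K s)

/-- The standard `d`-sphere: the complex of all nonempty proper subsets of a `(d+2)`-set. -/
def IsStandardSphere (K : Finset (Finset V)) (d : ℕ) : Prop :=
  ∃ A : Finset V, A.card = d + 2 ∧ K = A.powerset.filter fun s => s.Nonempty ∧ s ≠ A

/-- `StarringOf X Y` : `Y` is obtained from `X` by starring a new vertex `v` in a facet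
`σ` of `X`, i.e. by replacing the facet `σ` with the cone with apex `v` over its boundary. -/
def StarringOf (X Y : Finset (Finset V)) : Prop :=
  ∃ (σ : Finset V) (v : V), IsFacet X σ ∧ v ∉ vertexSet X ∧
    Y = X.erase σ ∪ (σ.powerset.filter fun τ => τ ≠ σ).image fun τ => insert v τ

/-- A stacked `d`-sphere: a complex obtained from the standard `d`-sphere by a finite
sequence of starrings. -/
def IsStackedSphere (K : Finset (Finset V)) (d : ℕ) : Prop :=
  ∃ S : Finset (Finset V), IsStandardSphere S d ∧ Relation.ReflTransGen StarringOf S K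

/-- The induced subcomplex on a set `U` of vertices. -/
def induced (K : Finset (Finset V)) (U : Finset V) : Finset (Finset V) :=
  K.filter fun s => s ⊆ U

/-- The simplicial complement of the induced subcomplex on `U`: the induced subcomplex on
the complementary set of vertices. -/
def simpComplement (K : Finset (Finset V)) (U : Finset V) : Finset (Finset V) :=
  induced K (vertexSet K \ U)

/-- The degree of a vertex: the number of vertices of its link. -/
def vertDegree (K : Finset (Finset V)) (v : V) : ℕ := (vertexSet (link K {v})).card

/-- `farApart G x y` : the distance from `x` to `y` in the graph `G` is at least `3`
(where unreachable counts as infinite distance). -/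
def farApart (G : SimpleGraph V) (x y : V) : Prop :=
  x ≠ y ∧ ¬ G.Adj x y ∧ ∀ z : V, ¬ (G.Adj x z ∧ G.Adj z y)

/-- `Admissible X σ₁ σ₂ ψ` : `σ₁, σ₂` are disjoint facets of `X` and `ψ` restricts to a
bijection from `σ₁` onto `σ₂` moving every `x ∈ σ₁` to distance at least 3 from itself. -/
def Admissible (X : Finset (Finset V)) (σ₁ σ₂ : Finset V) (ψ : V → V) : Prop :=
  IsFacet X σ₁ ∧ IsFacet X σ₂ ∧ Disjoint σ₁ σ₂ ∧ Set.BijOn ψ ↑σ₁ ↑σ₂ ∧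
    ∀ x ∈ σ₁, farApart (edgeGraph X) x (ψ x)

/-- Elementary handle addition `X^ψ`: remove the two facets `σ₁, σ₂` and identify each
`x ∈ σ₁` with `ψ x ∈ σ₂`. -/
def handleAdd (X : Finset (Finset V)) (σ₁ σ₂ : Finset V) (ψ : V → V) :
    Finset (Finset V) :=
  ((X.erase σ₁).erase σ₂).image fun s => s.image fun x => if x ∈ σ₁ then ψ x else x

/-- Isomorphism of simplicial complexes: an injection on vertices carrying the faces of one
complex exactly onto the faces of the other. -/
def CplxIso {W : Type} [DecidableEq W] (K : Finset (Finset V)) (L : Finset (Finset W)) :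
    Prop :=
  ∃ f : V → W, Set.InjOn f ↑(vertexSet K) ∧ L = K.image fun s => s.image f

/-- The connected component of the complex `K` containing the vertex `v` (as a subcomplex). -/
def componentOf (K : Finset (Finset V)) (v : V) : Finset (Finset V) :=
  K.filter fun s => ∀ x ∈ s, (edgeGraph K).Reachable v x

/-- The edges of `M` having exactly one end in `A`. -/
def crossEdges (M : Finset (Finset V)) (A : Finset V) : Finset (Finset V) :=
  M.filter fun e => e.card = 2 ∧ (e ∩ A).card = 1

/-- The graph whose vertices are the edges of `M` with exactly one end in `A`, two of them
being adjacent when the union of the corresponding edges is a 2-dimensional face of `M`. -/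
def crossGraph (M : Finset (Finset V)) (A : Finset V) : SimpleGraph (Finset V) where
  Adj e f := e ≠ f ∧ e ∈ crossEdges M A ∧ f ∈ crossEdges M A ∧
    e ∪ f ∈ M ∧ (e ∪ f).card = 3
  symm := by
    constructor
    intro e f h
    obtain ⟨h1, h2, h3, h4, h5⟩ := h
    exact ⟨h1.symm, h3, h2, by rwa [Finset.union_comm], by rwa [Finset.union_comm]⟩
  loopless := by
    constructor
    intro e h
    exact h.1 rfl

/-- The class `𝒦(d)`: normal `d`-pseudomanifolds all of whose vertex links are stacked
`(d-1)`-spheres. -/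
def InClassK (K : Finset (Finset V)) (d : ℕ) : Prop :=
  IsNormalPM K d ∧ ∀ v ∈ vertexSet K, IsStackedSphere (link K {v}) (d - 1)

/-- The total number of partitions of `n`. -/
def numPartitions (n : ℕ) : ℕ := Fintype.card (Nat.Partition n)

/-- The number of even partitions of `n` (those with an even number of even parts). -/
def numEvenPartitions (n : ℕ) : ℕ :=
  Fintype.card {p : Nat.Partition n // Even (Multiset.card (p.parts.filter fun i => Even i))}

/-- The number of odd partitions of `n` (those with an odd number of even parts). -/
def numOddPartitions (n : ℕ) : ℕ :=
  Fintype.card {p : Nat.Partition n // Odd (Multiset.card (p.parts.filter fun i => Even i))}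

/-- The facets of `N^{d+1}_{m+d+1}` : the sets of `d+2` consecutive integers inside
`{1, …, m+d+1}`. -/
def NFacets (d m : ℕ) : Finset (Finset ℕ) :=
  (Finset.Icc 1 m).image fun k => Finset.Icc k (k + d + 1)

/-- The complex `N^{d+1}_{m+d+1}` on vertex set `{1, …, m+d+1}` whose facets are the sets
of `d+2` consecutive integers. -/
def Ncomplex (d m : ℕ) : Finset (Finset ℕ) :=
  ((NFacets d m).biUnion Finset.powerset).filter fun s => s.Nonempty

/-- The facets of the boundary complex `∂N^{d+1}_{m+d+1}` : the `(d+1)`-element subsets of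
`{1, …, m+d+1}` contained in exactly one facet of `N^{d+1}_{m+d+1}`. -/
def boundaryNFacets (d m : ℕ) : Finset (Finset ℕ) :=
  (Finset.Icc 1 (m + d + 1)).powerset.filter fun s =>
    s.card = d + 1 ∧ ((Finset.Icc 1 m).filter fun k => s ⊆ Finset.Icc k (k + d + 1)).card = 1

/-- The boundary complex `∂N^{d+1}_{m+d+1}`. -/
def boundaryN (d m : ℕ) : Finset (Finset ℕ) :=
  ((boundaryNFacets d m).biUnion Finset.powerset).filter fun s => s.Nonempty


def standardSphere (A : Finset V) : Finset (Finset V) :=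
  A.powerset.filter fun s => s.Nonempty ∧ s ≠ A

def starFacet (X : Finset (Finset V)) (σ : Finset V) (v : V) : Finset (Finset V) :=
  X.erase σ ∪ (σ.powerset.filter fun τ => τ ≠ σ).image fun τ => insert v τ

def neighbors (K : Finset (Finset V)) (v : V) : Finset V :=
  (vertexSet K).filter fun x => (edgeGraph K).Adj v x

theorem isStandardSphere_iff {K : Finset (Finset V)} {d : ℕ} :
    IsStandardSphere K d ↔ ∃ A : Finset V, A.card = d + 2 ∧ K = standardSphere A :=
  Iff.rfl

theorem starringOf_iff {X Y : Finset (Finset V)} :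
    StarringOf X Y ↔ ∃ σ v, IsFacet X σ ∧ v ∉ vertexSet X ∧ Y = starFacet X σ v :=
  Iff.rfl

section Basic

variable {K X : Finset (Finset V)} {A s σ : Finset V} {v w x a b : V}

theorem mem_standardSphere : s ∈ standardSphere A ↔ s ⊆ A ∧ s.Nonempty ∧ s ≠ A := by
  simp [standardSphere]

theorem mem_starFacet :
    s ∈ starFacet X σ v ↔ (s ∈ X ∧ s ≠ σ) ∨ ∃ t ⊆ σ, t ≠ σ ∧ s = insert v t := by
  simp only [starFacet, mem_union, mem_erase, mem_image, mem_filter, mem_powerset]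
  constructor
  · rintro (⟨hs, hsX⟩ | ⟨t, ⟨htσ, ht⟩, rfl⟩)
    exacts [Or.inl ⟨hsX, hs⟩, Or.inr ⟨t, htσ, ht, rfl⟩]
  · rintro (⟨hsX, hs⟩ | ⟨t, htσ, ht, rfl⟩)
    exacts [Or.inl ⟨hs, hsX⟩, Or.inr ⟨t, ⟨htσ, ht⟩, rfl⟩]

theorem mem_vertexSet : x ∈ vertexSet K ↔ ∃ s ∈ K, x ∈ s := by
  simp [vertexSet, Finset.mem_sup]

theorem subset_vertexSet (hs : s ∈ K) : s ⊆ vertexSet K :=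
  Finset.le_sup (f := id) hs

theorem edgeGraph_adj : (edgeGraph K).Adj a b ↔ a ≠ b ∧ ({a, b} : Finset V) ∈ K :=
  Iff.rfl

theorem mem_neighbors : x ∈ neighbors K v ↔ (edgeGraph K).Adj v x := by
  rw [neighbors, mem_filter, and_iff_right_iff_imp]
  exact fun h => subset_vertexSet h.2 (by simp)

theorem neighbors_subset_vertexSet : neighbors K v ⊆ vertexSet K :=
  filter_subset _ _

theorem vertexSet_standardSphere (hA : 2 ≤ A.card) : vertexSet (standardSphere A) = A := by
  refine Subset.antisymm (fun x hx => ?_) (fun a ha => ?_)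
  · obtain ⟨s, hs, hxs⟩ := mem_vertexSet.1 hx
    exact (mem_standardSphere.1 hs).1 hxs
  · refine subset_vertexSet (mem_standardSphere.2 ⟨singleton_subset_iff.2 ha, by simp, ?_⟩)
      (mem_singleton_self a)
    rintro rfl
    simp at hA

theorem neighbors_standardSphere (hA : 3 ≤ A.card) (hv : v ∈ A) :
    neighbors (standardSphere A) v = A.erase v := by
  ext x
  rw [mem_neighbors, edgeGraph_adj, mem_standardSphere, mem_erase, insert_subset_iff,
    singleton_subset_iff]
  refine ⟨fun ⟨hvx, ⟨_, hx⟩, _⟩ => ⟨hvx.symm, hx⟩,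
    fun ⟨hxv, hx⟩ => ⟨hxv.symm, ⟨hv, hx⟩, by simp, ?_⟩⟩
  intro h
  have := card_le_two (a := v) (b := x)
  rw [h] at this
  omega

theorem vertexSet_starFacet (hσ : σ ⊆ vertexSet X) (h2 : 2 ≤ σ.card) :
    vertexSet (starFacet X σ v) = insert v (vertexSet X) := by
  have hsingle : ∀ y, {y} ≠ σ := by
    rintro y rfl
    simp at h2
  refine Subset.antisymm (fun x hx => ?_) (fun x hx => ?_)
  · obtain ⟨s, hs, hxs⟩ := mem_vertexSet.1 hx
    rcases mem_starFacet.1 hs with ⟨hsX, _⟩ | ⟨t, htσ, _, rfl⟩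
    · exact mem_insert_of_mem (subset_vertexSet hsX hxs)
    · rcases mem_insert.1 hxs with rfl | hxt
      exacts [mem_insert_self _ _, mem_insert_of_mem (hσ (htσ hxt))]
  · rcases mem_insert.1 hx with rfl | hx
    · obtain ⟨y, hy⟩ := card_pos.1 (by omega : 0 < σ.card)
      exact mem_vertexSet.2 ⟨insert x {y},
        mem_starFacet.2 (Or.inr ⟨{y}, singleton_subset_iff.2 hy, hsingle y, rfl⟩), by simp⟩
    · obtain ⟨s, hs, hxs⟩ := mem_vertexSet.1 hx
      by_cases hsσ : s = σ
      · subst hsσ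
        exact mem_vertexSet.2 ⟨insert v {x},
          mem_starFacet.2 (Or.inr ⟨{x}, singleton_subset_iff.2 hxs, hsingle x, rfl⟩), by simp⟩
      · exact mem_vertexSet.2 ⟨s, mem_starFacet.2 (Or.inl ⟨hs, hsσ⟩), hxs⟩

theorem vertexSet_starFacet_subset (hσ : σ ∈ X) :
    vertexSet (starFacet X σ v) ⊆ insert v (vertexSet X) := by
  intro x hx
  obtain ⟨s, hs, hxs⟩ := mem_vertexSet.1 hx
  rcases mem_starFacet.1 hs with ⟨hsX, _⟩ | ⟨t, htσ, _, rfl⟩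
  · exact mem_insert_of_mem (subset_vertexSet hsX hxs)
  · rcases mem_insert.1 hxs with rfl | hxt
    exacts [mem_insert_self _ _, mem_insert_of_mem (subset_vertexSet hσ (htσ hxt))]

/-- Only the edge `σ` itself could be lost, and `σ` is no edge once it has three vertices. -/
theorem edgeGraph_starFacet_adj (hσ : 3 ≤ σ.card) (ha : a ≠ v) (hb : b ≠ v) :
    (edgeGraph (starFacet X σ v)).Adj a b ↔ (edgeGraph X).Adj a b := by
  rw [edgeGraph_adj, edgeGraph_adj, mem_starFacet]
  refine and_congr_right fun _ => ⟨?_, fun hab => Or.inl ⟨hab, ?_⟩⟩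
  · rintro (⟨hab, _⟩ | ⟨t, _, _, hEq⟩)
    · exact hab
    · have : v ∈ ({a, b} : Finset V) := hEq ▸ mem_insert_self v t
      simp only [mem_insert, mem_singleton] at this
      rcases this with rfl | rfl
      exacts [absurd rfl ha, absurd rfl hb]
  · rintro rfl
    have := card_le_two (a := a) (b := b)
    omega

theorem not_adj_of_notMem_vertexSet (hv : v ∉ vertexSet K) : ¬(edgeGraph K).Adj w v :=
  fun h => hv (subset_vertexSet h.2 (by simp))

theorem adj_starFacet_self_iff (hσX : σ ∈ X) (hσ : 2 ≤ σ.card) (hv : v ∉ vertexSet X) :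
    (edgeGraph (starFacet X σ v)).Adj v x ↔ x ∈ σ := by
  rw [edgeGraph_adj, mem_starFacet]
  constructor
  · rintro ⟨hvx, ⟨hvxX, _⟩ | ⟨t, htσ, _, hEq⟩⟩
    · exact absurd (subset_vertexSet hvxX (mem_insert_self v {x})) hv
    · have hx : x ∈ insert v t := hEq ▸ by simp
      exact htσ ((mem_insert.1 hx).resolve_left hvx.symm)
  · intro hx
    refine ⟨fun h => hv (subset_vertexSet hσX (h ▸ hx)),
      Or.inr ⟨{x}, singleton_subset_iff.2 hx, ?_, rfl⟩⟩
    rintro rfl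
    simp at hσ

theorem neighbors_starFacet_self (hσX : σ ∈ X) (hσ : 2 ≤ σ.card) (hv : v ∉ vertexSet X) :
    neighbors (starFacet X σ v) v = σ := by
  ext x
  rw [mem_neighbors, adj_starFacet_self_iff hσX hσ hv]

theorem neighbors_starFacet_of_mem (hσX : σ ∈ X) (hσ : 3 ≤ σ.card) (hv : v ∉ vertexSet X)
    (hw : w ∈ σ) : neighbors (starFacet X σ v) w = insert v (neighbors X w) := by
  have hwv : w ≠ v := fun h => hv (h ▸ subset_vertexSet hσX hw)
  ext x
  by_cases hx : x = v
  · subst hx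
    simp only [mem_insert_self, iff_true, mem_neighbors]
    exact ((adj_starFacet_self_iff hσX (by omega) hv).2 hw).symm
  · rw [mem_insert, mem_neighbors, mem_neighbors, edgeGraph_starFacet_adj hσ hwv hx]
    simp [hx]

theorem neighbors_starFacet_of_notMem (hσX : σ ∈ X) (hσ : 3 ≤ σ.card) (hv : v ∉ vertexSet X)
    (hw : w ∉ σ) (hwv : w ≠ v) : neighbors (starFacet X σ v) w = neighbors X w := by
  ext x
  by_cases hx : x = v
  · subst hx
    rw [mem_neighbors, mem_neighbors, (edgeGraph _).adj_comm,
      adj_starFacet_self_iff hσX (by omega) hv]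
    exact iff_of_false hw (not_adj_of_notMem_vertexSet hv)
  · rw [mem_neighbors, mem_neighbors, edgeGraph_starFacet_adj hσ hwv hx]

end Basic

structure StackedInvariants (d : ℕ) (X : Finset (Finset V)) : Prop where
  card_le : ∀ s ∈ X, s.card ≤ d + 1
  exists_superset_card_eq : ∀ s ∈ X, ∃ t ∈ X, s ⊆ t ∧ t.card = d + 1
  card_vertexSet : d + 2 ≤ (vertexSet X).card
  card_neighbors : ∀ v ∈ vertexSet X, d + 1 ≤ (neighbors X v).card

namespace StackedInvariants

variable {d : ℕ} {X : Finset (Finset V)} {σ : Finset V} {v : V}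

theorem card_facet (hX : StackedInvariants d X) (hσ : IsFacet X σ) : σ.card = d + 1 := by
  obtain ⟨t, ht, hσt, htc⟩ := hX.exists_superset_card_eq σ hσ.1
  rwa [hσ.2 t ht hσt]

theorem standardSphere (hd : 1 ≤ d) {A : Finset V} (hA : A.card = d + 2) :
    StackedInvariants d (standardSphere A) where
  card_le s hs := by
    obtain ⟨hsA, -, hs⟩ := mem_standardSphere.1 hs
    have := card_lt_card (hsA.ssubset_of_ne hs)
    omega
  exists_superset_card_eq s hs := by
    obtain ⟨hsA, hs₀, hs⟩ := mem_standardSphere.1 hs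
    have := card_lt_card (hsA.ssubset_of_ne hs)
    obtain ⟨t, hst, htA, htc⟩ := exists_subsuperset_card_eq hsA (n := d + 1) (by omega) (by omega)
    refine ⟨t, mem_standardSphere.2 ⟨htA, hs₀.mono hst, ?_⟩, hst, htc⟩
    rintro rfl
    omega
  card_vertexSet := by rw [vertexSet_standardSphere (by omega), hA]
  card_neighbors v hv := by
    rw [vertexSet_standardSphere (by omega)] at hv
    rw [neighbors_standardSphere (by omega) hv, card_erase_of_mem hv, hA]
    omega

theorem starFacet (hd : 2 ≤ d) (hX : StackedInvariants d X) (hσ : IsFacet X σ)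
    (hv : v ∉ vertexSet X) : StackedInvariants d (starFacet X σ v) := by
  have hσc := hX.card_facet hσ
  have hσV := subset_vertexSet hσ.1
  have hcone : ∀ t ⊆ σ, t ≠ σ → ∃ s ∈ _root_.starFacet X σ v, insert v t ⊆ s ∧ s.card = d + 1 := by
    intro t htσ ht
    have := card_lt_card (htσ.ssubset_of_ne ht)
    obtain ⟨s, hts, hsσ, hsc⟩ := exists_subsuperset_card_eq htσ (n := d) (by omega) (by omega)
    have hs : s ≠ σ := by
      rintro rfl
      omega
    refine ⟨insert v s, mem_starFacet.2 (Or.inr ⟨s, hsσ, hs, rfl⟩), insert_subset_insert v hts, ?_⟩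
    rw [card_insert_of_notMem fun h => hv (hσV (hsσ h)), hsc]
  refine ⟨fun s hs => ?_, fun s hs => ?_, ?_, fun w hw => ?_⟩
  · rcases mem_starFacet.1 hs with ⟨hsX, _⟩ | ⟨t, htσ, ht, rfl⟩
    · exact hX.card_le s hsX
    · have := card_lt_card (htσ.ssubset_of_ne ht)
      have := card_insert_le v t
      omega
  · rcases mem_starFacet.1 hs with ⟨hsX, hsσ⟩ | ⟨t, htσ, ht, rfl⟩
    · obtain ⟨t, htX, hst, htc⟩ := hX.exists_superset_card_eq s hsX
      by_cases htσ : t = σ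
      · subst htσ
        obtain ⟨r, hr, hsr, hrc⟩ := hcone s hst hsσ
        exact ⟨r, hr, (subset_insert v s).trans hsr, hrc⟩
      · exact ⟨t, mem_starFacet.2 (Or.inl ⟨htX, htσ⟩), hst, htc⟩
    · exact hcone t htσ ht
  · rw [vertexSet_starFacet hσV (by omega), card_insert_of_notMem hv]
    have := hX.card_vertexSet
    omega
  · rw [vertexSet_starFacet hσV (by omega)] at hw
    rcases mem_insert.1 hw with rfl | hw
    · rw [neighbors_starFacet_self hσ.1 (by omega) hv, hσc]
    · by_cases hwσ : w ∈ σ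
      · rw [neighbors_starFacet_of_mem hσ.1 (by omega) hv hwσ]
        exact (hX.card_neighbors w hw).trans (card_le_card (subset_insert _ _))
      · rw [neighbors_starFacet_of_notMem hσ.1 (by omega) hv hwσ fun h => hv (h ▸ hw)]
        exact hX.card_neighbors w hw

end StackedInvariants

namespace IsStackedSphere

variable {d : ℕ} {X : Finset (Finset V)}

theorem stackedInvariants (hd : 2 ≤ d) (hX : IsStackedSphere X d) : StackedInvariants d X := by
  obtain ⟨S, hS, hSX⟩ := hX
  induction hSX with
  | refl =>
    obtain ⟨A, hA, rfl⟩ := isStandardSphere_iff.1 hS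
    exact .standardSphere (by omega) hA
  | tail _ hstep ih =>
    obtain ⟨σ, v, hσ, hv, rfl⟩ := starringOf_iff.1 hstep
    exact ih.starFacet hd hσ hv

theorem isStandardSphere_of_card (hd : 2 ≤ d) (hX : IsStackedSphere X d)
    (hcard : (vertexSet X).card = d + 2) : IsStandardSphere X d := by
  obtain ⟨S, hS, hSX⟩ := hX
  rcases hSX.cases_tail with rfl | ⟨X₀, hSX₀, hstep⟩
  · exact hS
  obtain ⟨σ, v, hσ, hv, rfl⟩ := starringOf_iff.1 hstep
  have hX₀ := stackedInvariants hd ⟨S, hS, hSX₀⟩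
  rw [vertexSet_starFacet (subset_vertexSet hσ.1) (by rw [hX₀.card_facet hσ]; omega),
    card_insert_of_notMem hv] at hcard
  have := hX₀.card_vertexSet
  omega

end IsStackedSphere

section Commute

variable {X : Finset (Finset V)} {σ τ : Finset V} {u v : V}

theorem starFacet_comm (hvτ : v ∉ τ) (huσ : u ∉ σ) :
    starFacet (starFacet X σ v) τ u = starFacet (starFacet X τ u) σ v := by
  ext s
  simp only [mem_starFacet]
  constructor
  · rintro (⟨(⟨hsX, hsσ⟩ | ⟨t, htσ, ht, rfl⟩), hsτ⟩ | ⟨t, htτ, ht, rfl⟩)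
    · exact Or.inl ⟨Or.inl ⟨hsX, hsτ⟩, hsσ⟩
    · exact Or.inr ⟨t, htσ, ht, rfl⟩
    · refine Or.inl ⟨Or.inr ⟨t, htτ, ht, rfl⟩, ?_⟩
      rintro rfl
      exact huσ (mem_insert_self u t)
  · rintro (⟨(⟨hsX, hsτ⟩ | ⟨t, htτ, ht, rfl⟩), hsσ⟩ | ⟨t, htσ, ht, rfl⟩)
    · exact Or.inl ⟨Or.inl ⟨hsX, hsσ⟩, hsτ⟩
    · exact Or.inr ⟨t, htτ, ht, rfl⟩
    · refine Or.inl ⟨Or.inr ⟨t, htσ, ht, rfl⟩, ?_⟩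
      rintro rfl
      exact hvτ (mem_insert_self v t)

theorem mem_starFacet_standardSphere (huv : u ≠ v) (hu : u ∉ τ) (hv : v ∉ τ) {s : Finset V} :
    s ∈ starFacet (standardSphere (insert v τ)) τ u ↔
      s.Nonempty ∧ s ⊆ insert u (insert v τ) ∧ ¬(u ∈ s ∧ v ∈ s) ∧ ¬τ ⊆ s := by
  rw [mem_starFacet, mem_standardSphere]
  constructor
  · rintro (⟨⟨hs, hs₀, hsA⟩, hsτ⟩ | ⟨t, htτ, ht, rfl⟩)
    · refine ⟨hs₀, hs.trans (subset_insert _ _), fun h => ?_, fun hτs => ?_⟩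
      · rcases mem_insert.1 (hs h.1) with h' | h'
        exacts [huv h', hu h']
      · rcases em (v ∈ s) with hvs | hvs
        · exact hsA (Subset.antisymm hs (insert_subset hvs hτs))
        · exact hsτ (Subset.antisymm (fun x hx => (mem_insert.1 (hs hx)).resolve_left
            fun h => hvs (h ▸ hx)) hτs)
    · refine ⟨insert_nonempty _ _, insert_subset_insert u (htτ.trans (subset_insert _ _)),
        fun h => ?_, fun hτs => ?_⟩
      · rcases mem_insert.1 h.2 with h' | h'
        exacts [huv h'.symm, hv (htτ h')]
      · exact ht (Subset.antisymm htτ fun x hx =>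
          (mem_insert.1 (hτs hx)).resolve_left fun h => hu (h ▸ hx))
  · rintro ⟨hs₀, hs, huvs, hτs⟩
    by_cases hus : u ∈ s
    · refine Or.inr ⟨s.erase u, fun x hx => ?_, fun h => hτs (h ▸ erase_subset u s),
        (insert_erase hus).symm⟩
      obtain ⟨hxu, hxs⟩ := mem_erase.1 hx
      rcases mem_insert.1 ((mem_insert.1 (hs hxs)).resolve_left hxu) with rfl | hxτ
      exacts [absurd ⟨hus, hxs⟩ huvs, hxτ]
    · have hsA : s ⊆ insert v τ := fun x hx => (mem_insert.1 (hs hx)).resolve_left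
        fun h => hus (h ▸ hx)
      refine Or.inl ⟨⟨hsA, hs₀, fun h => hτs (h ▸ subset_insert v τ)⟩, fun h => hτs h.ge⟩

/-- Both sides are the boundary of the bipyramid over `τ` with apexes `u` and `v`. -/
theorem starFacet_standardSphere_comm (huv : u ≠ v) (hu : u ∉ τ) (hv : v ∉ τ) :
    starFacet (standardSphere (insert v τ)) τ u = starFacet (standardSphere (insert u τ)) τ v := by
  ext s
  rw [mem_starFacet_standardSphere huv hu hv, mem_starFacet_standardSphere huv.symm hv hu,
    insert_comm u v τ, and_comm (a := v ∈ s)]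

end Commute

def IsStackedStarring (d : ℕ) (X : Finset (Finset V)) (σ : Finset V) (v : V) : Prop :=
  ∃ X', IsStackedSphere X' d ∧ σ ∈ X' ∧ v ∉ vertexSet X' ∧ X = starFacet X' σ v

section Unstarring

variable {d : ℕ} {X : Finset (Finset V)} {σ τ : Finset V} {u v : V}

theorem isStackedStarring_starFacet_standardSphere (hu : u ∉ τ) (hv : v ∉ τ) (huv : u ≠ v)
    (hτ : τ.card = d + 1) :
    IsStackedStarring d (starFacet (standardSphere (insert v τ)) τ u) τ v := by
  have hτu : (insert u τ).card = d + 2 := by rw [card_insert_of_notMem hu, hτ]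
  refine ⟨standardSphere (insert u τ),
    ⟨_, isStandardSphere_iff.2 ⟨insert u τ, hτu, rfl⟩, .refl⟩, ?_, ?_,
    starFacet_standardSphere_comm huv hu hv⟩
  · refine mem_standardSphere.2 ⟨subset_insert u τ, card_pos.1 (by omega), fun h => ?_⟩
    exact hu (h ▸ mem_insert_self u τ)
  · rw [vertexSet_standardSphere (by omega), mem_insert]
    rintro (h | h)
    exacts [huv h.symm, hv h]

theorem IsStackedStarring.starFacet (h : IsStackedStarring d X σ v) (hσ : 2 ≤ σ.card)
    (hτ : IsFacet X τ) (hvτ : v ∉ τ) (hu : u ∉ vertexSet X) :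
    IsStackedStarring d (starFacet X τ u) σ v := by
  obtain ⟨X₁, ⟨S, hS, hSX₁⟩, hσX₁, hvX₁, rfl⟩ := h
  have hV := vertexSet_starFacet (v := v) (subset_vertexSet hσX₁) hσ
  have hτX₁ : τ ∈ X₁ := by
    rcases mem_starFacet.1 hτ.1 with ⟨hτX₁, _⟩ | ⟨t, _, _, rfl⟩
    exacts [hτX₁, absurd (mem_insert_self v t) hvτ]
  have hστ : σ ≠ τ := by
    rintro rfl
    rcases mem_starFacet.1 hτ.1 with ⟨_, hσσ⟩ | ⟨t, _, _, hσ⟩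
    exacts [hσσ rfl, hvX₁ (subset_vertexSet hσX₁ (hσ ▸ mem_insert_self v t))]
  -- a face of `X₁` strictly above `τ` would have to be `σ`, and then `insert v τ` lies above `τ`
  have hτf : IsFacet X₁ τ := by
    refine ⟨hτX₁, fun t ht hτt => ?_⟩
    by_cases htσ : t = σ
    · subst htσ
      have := hτ.2 _ (mem_starFacet.2 (Or.inr ⟨τ, hτt, hστ.symm, rfl⟩)) (subset_insert v τ)
      exact absurd (this ▸ mem_insert_self v τ) hvτ
    · exact hτ.2 t (mem_starFacet.2 (Or.inl ⟨ht, htσ⟩)) hτt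
  have huX₁ : u ∉ vertexSet X₁ := fun h => hu (hV ▸ mem_insert_of_mem h)
  have hvu : v ≠ u := fun h => hu (h ▸ hV ▸ mem_insert_self v _)
  refine ⟨starFacet X₁ τ u, ⟨S, hS, hSX₁.tail (starringOf_iff.2 ⟨τ, u, hτf, huX₁, rfl⟩)⟩,
    mem_starFacet.2 (Or.inl ⟨hσX₁, hστ⟩), fun h => ?_,
    starFacet_comm hvτ fun h => huX₁ (subset_vertexSet hσX₁ h)⟩
  rcases mem_insert.1 (vertexSet_starFacet_subset hτX₁ h) with h | h
  exacts [hvu h, hvX₁ h]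

theorem IsStackedSphere.isStackedStarring_neighbors (hd : 2 ≤ d) (hX : IsStackedSphere X d)
    (hv : v ∈ vertexSet X) (hdeg : (neighbors X v).card = d + 1)
    (hbig : d + 2 < (vertexSet X).card) : IsStackedStarring d X (neighbors X v) v := by
  obtain ⟨S, hS, hSX⟩ := hX
  induction hSX with
  | refl =>
    obtain ⟨A, hA, rfl⟩ := isStandardSphere_iff.1 hS
    rw [vertexSet_standardSphere (by omega), hA] at hbig
    omega
  | @tail b _ hSb hstep ih =>
    obtain ⟨τ, u, hτ, hu, rfl⟩ := starringOf_iff.1 hstep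
    have hb := IsStackedSphere.stackedInvariants hd ⟨S, hS, hSb⟩
    have hτc := hb.card_facet hτ
    have hV := vertexSet_starFacet (v := u) (subset_vertexSet hτ.1) (by omega)
    by_cases hvu : v = u
    · subst hvu
      rw [neighbors_starFacet_self hτ.1 (by omega) hu]
      exact ⟨b, ⟨S, hS, hSb⟩, hτ.1, hu, rfl⟩
    have hvb : v ∈ vertexSet b := (mem_insert.1 (hV ▸ hv)).resolve_left hvu
    have hvτ : v ∉ τ := by
      intro hvτ
      rw [neighbors_starFacet_of_mem hτ.1 (by omega) hu hvτ,
        card_insert_of_notMem fun h => hu (neighbors_subset_vertexSet h)] at hdeg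
      have := hb.card_neighbors v hvb
      omega
    rw [neighbors_starFacet_of_notMem hτ.1 (by omega) hu hvτ hvu] at hdeg ⊢
    rcases hb.card_vertexSet.eq_or_lt with hsmall | hbig
    · obtain ⟨A, hA, rfl⟩ := isStandardSphere_iff.1
        (IsStackedSphere.isStandardSphere_of_card hd ⟨S, hS, hSb⟩ hsmall.symm)
      rw [vertexSet_standardSphere (by omega)] at hvb hu
      have hτA : τ = A.erase v := by
        refine eq_of_subset_of_card_le (fun x hx => mem_erase.2 ⟨?_, ?_⟩) ?_
        · exact fun h => hvτ (h ▸ hx)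
        · exact (mem_standardSphere.1 hτ.1).1 hx
        · rw [card_erase_of_mem hvb, hA, hτc]
          omega
      rw [neighbors_standardSphere (by omega) hvb, ← hτA, ← insert_erase hvb, ← hτA]
      exact isStackedStarring_starFacet_standardSphere (fun h => hu (mem_of_mem_erase (hτA ▸ h)))
        hvτ (Ne.symm hvu) hτc
    · exact (ih hvb hdeg hbig).starFacet (by omega) hτ hvτ hu

end Unstarring

section Image

variable {W : Type} [DecidableEq W] {f : V → W} {X : Finset (Finset V)} {Y : Finset (Finset W)}
  {A σ : Finset V} {d : ℕ}

theorem image_standardSphere (hf : Set.InjOn f A) :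
    (standardSphere A).image (image f) = standardSphere (A.image f) := by
  ext t
  simp only [mem_image, mem_standardSphere]
  constructor
  · rintro ⟨s, ⟨hsA, hs₀, hs⟩, rfl⟩
    exact ⟨image_subset_image hsA, hs₀.image f,
      fun h => hs ((image_eq_image_iff_of_injOn hf hsA Subset.rfl).1 h)⟩
  · rintro ⟨htA, ht₀, ht⟩
    obtain ⟨s, hsA, rfl⟩ := subset_image_iff.1 htA
    exact ⟨s, ⟨hsA, image_nonempty.1 ht₀, fun h => ht (h ▸ rfl)⟩, rfl⟩

theorem image_starFacet (hf : Set.InjOn f (vertexSet X)) (hσ : σ ∈ X) (v : V) :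
    (starFacet X σ v).image (image f) = starFacet (X.image (image f)) (σ.image f) (f v) := by
  have hσV := subset_vertexSet hσ
  ext t
  simp only [mem_image, mem_starFacet]
  constructor
  · rintro ⟨s, ⟨hsX, hs⟩ | ⟨t, htσ, ht, rfl⟩, rfl⟩
    · exact Or.inl ⟨⟨s, hsX, rfl⟩,
        fun h => hs ((image_eq_image_iff_of_injOn hf (subset_vertexSet hsX) hσV).1 h)⟩
    · refine Or.inr ⟨t.image f, image_subset_image htσ, fun h => ht ?_, image_insert _ _ _⟩
      exact (image_eq_image_iff_of_injOn hf (htσ.trans hσV) hσV).1 h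
  · rintro (⟨⟨s, hsX, rfl⟩, hs⟩ | ⟨t, htσ, ht, rfl⟩)
    · exact ⟨s, Or.inl ⟨hsX, fun h => hs (h ▸ rfl)⟩, rfl⟩
    · obtain ⟨s, hsσ, rfl⟩ := subset_image_iff.1 htσ
      exact ⟨insert v s, Or.inr ⟨s, hsσ, fun h => ht (h ▸ rfl), rfl⟩, image_insert _ _ _⟩

theorem neighbors_eq_image (hf : Set.BijOn f (vertexSet X) (vertexSet Y))
    (hadj : ∀ u ∈ vertexSet X, ∀ v ∈ vertexSet X,
      (edgeGraph X).Adj u v ↔ (edgeGraph Y).Adj (f u) (f v))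
    {v : V} (hv : v ∈ vertexSet X) : neighbors Y (f v) = (neighbors X v).image f := by
  ext y
  constructor
  · intro hy
    obtain ⟨x, hx, rfl⟩ := hf.surjOn (neighbors_subset_vertexSet hy)
    exact mem_image_of_mem f (mem_neighbors.2 ((hadj v hv x hx).2 (mem_neighbors.1 hy)))
  · intro hy
    obtain ⟨x, hx, rfl⟩ := mem_image.1 hy
    exact mem_neighbors.2 ((hadj v hv x (neighbors_subset_vertexSet hx)).1 (mem_neighbors.1 hx))

theorem IsStandardSphere.eq_image (hd : 2 ≤ d) (hX : IsStandardSphere X d)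
    (hY : IsStackedSphere Y d) (hf : Set.BijOn f (vertexSet X) (vertexSet Y)) :
    Y = X.image (image f) := by
  obtain ⟨A, hA, rfl⟩ := isStandardSphere_iff.1 hX
  rw [vertexSet_standardSphere (by omega)] at hf
  have hYA : vertexSet Y = A.image f := coe_injective (by rw [coe_image, hf.image_eq])
  obtain ⟨B, hB, rfl⟩ := isStandardSphere_iff.1 (hY.isStandardSphere_of_card hd
    (by rw [hYA, card_image_of_injOn hf.injOn, hA]))
  rw [vertexSet_standardSphere (by omega)] at hYA
  rw [hYA, image_standardSphere hf.injOn]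

theorem IsStackedSphere.eq_image_of_adj_iff (hd : 2 ≤ d) (hX : IsStackedSphere X d)
    (hY : IsStackedSphere Y d) (hf : Set.BijOn f (vertexSet X) (vertexSet Y))
    (hadj : ∀ u ∈ vertexSet X, ∀ v ∈ vertexSet X,
      (edgeGraph X).Adj u v ↔ (edgeGraph Y).Adj (f u) (f v)) :
    Y = X.image (image f) := by
  obtain ⟨S, hS, hSX⟩ := hX
  induction hSX generalizing Y with
  | refl => exact hS.eq_image hd hY hf
  | @tail X₀ _ hSX₀ hstep ih =>
    obtain ⟨σ, v, hσ, hv, rfl⟩ := starringOf_iff.1 hstep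
    have hX₀ := IsStackedSphere.stackedInvariants hd ⟨S, hS, hSX₀⟩
    have hσc := hX₀.card_facet hσ
    have hVX := vertexSet_starFacet (v := v) (subset_vertexSet hσ.1) (by omega)
    have hvX : v ∈ vertexSet (starFacet X₀ σ v) := hVX ▸ mem_insert_self v _
    have hnbr : neighbors Y (f v) = σ.image f := by
      rw [neighbors_eq_image hf hadj hvX, neighbors_starFacet_self hσ.1 (by omega) hv]
    have hσf : (σ.image f).card = d + 1 := by
      rw [← hnbr, neighbors_eq_image hf hadj hvX,
        card_image_of_injOn (hf.injOn.mono (coe_subset.2 neighbors_subset_vertexSet)),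
        neighbors_starFacet_self hσ.1 (by omega) hv, hσc]
    have hbig : d + 2 < (vertexSet Y).card := by
      rw [← hf.finsetCard_eq, hVX, card_insert_of_notMem hv]
      have := hX₀.card_vertexSet
      omega
    obtain ⟨Y₀, hY₀, hσY₀, hvY₀, rfl⟩ : IsStackedStarring d Y (σ.image f) (f v) :=
      hnbr ▸ hY.isStackedStarring_neighbors hd (hf.mapsTo hvX) (hnbr ▸ hσf) hbig
    have hVY := vertexSet_starFacet (v := f v) (subset_vertexSet hσY₀) (by omega)
    have hf₀ : Set.BijOn f (vertexSet X₀) (vertexSet Y₀) :=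
      (Set.BijOn.insert_iff hv hvY₀).1 (by rw [← coe_insert, ← coe_insert, ← hVX, ← hVY]; exact hf)
    have hadj₀ : ∀ a ∈ vertexSet X₀, ∀ b ∈ vertexSet X₀,
        (edgeGraph X₀).Adj a b ↔ (edgeGraph Y₀).Adj (f a) (f b) := by
      intro a ha b hb
      rw [← edgeGraph_starFacet_adj (σ := σ) (v := v) (by omega) (ne_of_mem_of_not_mem ha hv)
          (ne_of_mem_of_not_mem hb hv),
        ← edgeGraph_starFacet_adj (σ := σ.image f) (v := f v) (by omega)
          (ne_of_mem_of_not_mem (hf₀.mapsTo ha) hvY₀) (ne_of_mem_of_not_mem (hf₀.mapsTo hb) hvY₀)]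
      exact hadj a (hVX ▸ mem_insert_of_mem ha) b (hVX ▸ mem_insert_of_mem hb)
    rw [ih hY₀ hf₀ hadj₀, image_starFacet hf₀.injOn hσ.1]

end Image

/-- A stacked `d`-sphere (`d ≥ 2`) is determined by its edge graph: if there is a graph
isomorphism between the edge graphs of two stacked `d`-spheres then the complexes are
isomorphic. -/
theorem stmt11 {V W : Type} [DecidableEq V] [DecidableEq W] (d : ℕ) (hd : 2 ≤ d)
    (X : Finset (Finset V)) (Y : Finset (Finset W))
    (hX : IsStackedSphere X d) (hY : IsStackedSphere Y d)
    (f : V → W) (hf : Set.BijOn f ↑(vertexSet X) ↑(vertexSet Y))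
    (hadj : ∀ u ∈ vertexSet X, ∀ v ∈ vertexSet X,
      (edgeGraph X).Adj u v ↔ (edgeGraph Y).Adj (f u) (f v)) :
    CplxIso X Y :=
  ⟨f, hf.injOn, hX.eq_image_of_adj_iff hd hY hf hadj⟩

end
end

section
/- For every $n \geq 2$, $P_0(n) \geq \frac{1}{2} P(n-1)$ and $P_1(n) \geq \frac{1}{2} P(n-1)$. -/
open Finset

noncomputable section

attribute [local instance] Classical.propDecidable

variable {V : Type} [DecidableEq V]

/-!
Adding a part `1` is an injection from partitions of `n - 1` to partitions of `n` that keeps the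
number of even parts, while increasing the largest part by one is an injection that changes the
parity of that part and hence of the number of even parts. So both `P₀(n)` and `P₁(n)` are at
least `P₀(n - 1)` and at least `P₁(n - 1)`, whose sum is `P(n - 1)`; for `n - 1 ≥ 1` a largest
part exists.
-/

theorem Multiset.sup_mem_of_ne_zero {α : Type*} [LinearOrder α] [OrderBot α] {s : Multiset α}
    (hs : s ≠ 0) : s.sup ∈ s := by
  induction s using Multiset.induction_on with
  | empty => exact absurd rfl hs
  | cons a s ih =>
    rw [Multiset.sup_cons]
    rcases eq_or_ne s 0 with rfl | hs'
    · simp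
    · rcases max_choice a s.sup with h | h <;> rw [h]
      · exact Multiset.mem_cons_self a s
      · exact Multiset.mem_cons_of_mem (ih hs')

theorem Multiset.even_card_filter_even_cons_succ_erase_iff {s : Multiset ℕ} {a : ℕ}
    (ha : a ∈ s) :
    Even (Multiset.card (((a + 1) ::ₘ s.erase a).filter fun i => Even i)) ↔
      ¬ Even (Multiset.card (s.filter fun i => Even i)) := by
  conv_rhs => rw [← Multiset.cons_erase ha]
  by_cases h : Even a <;> simp [h, Nat.even_add_one]

namespace Nat.Partition

variable {m : ℕ}

def consOne (q : m.Partition) : (m + 1).Partition where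
  parts := 1 ::ₘ q.parts
  parts_pos := by
    intro i hi
    rcases Multiset.mem_cons.mp hi with rfl | hi
    · exact Nat.one_pos
    · exact q.parts_pos hi
  parts_sum := by rw [Multiset.sum_cons, q.parts_sum, add_comm]

theorem consOne_injective : Function.Injective (consOne (m := m)) := fun _ _ h =>
  Nat.Partition.ext <| (Multiset.cons_inj_right 1).mp (congrArg Nat.Partition.parts h)

theorem filter_even_consOne_parts (q : m.Partition) :
    (q.consOne.parts.filter fun i => Even i) = q.parts.filter fun i => Even i :=
  Multiset.filter_cons_of_neg _ Nat.not_even_one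

theorem parts_ne_zero (q : (m + 1).Partition) : q.parts ≠ 0 := by
  intro h
  simpa [h] using q.parts_sum

theorem parts_sup_mem (q : (m + 1).Partition) : q.parts.sup ∈ q.parts :=
  Multiset.sup_mem_of_ne_zero q.parts_ne_zero

def succLargestPart (q : (m + 1).Partition) : (m + 2).Partition where
  parts := (q.parts.sup + 1) ::ₘ q.parts.erase q.parts.sup
  parts_pos := by
    intro i hi
    rcases Multiset.mem_cons.mp hi with rfl | hi
    · exact Nat.succ_pos _
    · exact q.parts_pos (Multiset.mem_of_mem_erase hi)
  parts_sum := by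
    have h := congrArg Multiset.sum (Multiset.cons_erase q.parts_sup_mem)
    rw [Multiset.sum_cons, q.parts_sum] at h
    rw [Multiset.sum_cons]
    omega

theorem succLargestPart_parts_sup (q : (m + 1).Partition) :
    q.succLargestPart.parts.sup = q.parts.sup + 1 := by
  have herase : (q.parts.erase q.parts.sup).sup ≤ q.parts.sup :=
    Multiset.sup_le.mpr fun _ hb => Multiset.le_sup (Multiset.mem_of_mem_erase hb)
  simp only [succLargestPart, Multiset.sup_cons]
  exact sup_eq_left.mpr (herase.trans (Nat.le_succ _))

theorem succLargestPart_injective : Function.Injective (succLargestPart (m := m)) := by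
  intro q q' h
  have hparts := congrArg Nat.Partition.parts h
  have hsup : q.parts.sup = q'.parts.sup := by
    simpa [succLargestPart_parts_sup] using congrArg Multiset.sup hparts
  have herase : q.parts.erase q'.parts.sup = q'.parts.erase q'.parts.sup := by
    simp only [succLargestPart, hsup] at hparts
    exact (Multiset.cons_inj_right _).mp hparts
  ext1
  rw [← Multiset.cons_erase q.parts_sup_mem, hsup, herase, Multiset.cons_erase q'.parts_sup_mem]

theorem even_card_filter_even_succLargestPart_parts_iff (q : (m + 1).Partition) :
    Even (Multiset.card (q.succLargestPart.parts.filter fun i => Even i)) ↔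
      ¬ Even (Multiset.card (q.parts.filter fun i => Even i)) :=
  Multiset.even_card_filter_even_cons_succ_erase_iff q.parts_sup_mem

end Nat.Partition

open Nat.Partition

theorem Fintype.card_subtype_le_of_injective {α β : Type*} {p : α → Prop} {q : β → Prop}
    [Fintype {a // p a}] [Fintype {b // q b}] (f : α → β) (hf : Function.Injective f)
    (hpq : ∀ a, p a → q (f a)) : Fintype.card {a // p a} ≤ Fintype.card {b // q b} :=
  Fintype.card_le_of_injective _ (Subtype.map_injective hpq hf)

theorem numPartitions_eq_add (n : ℕ) :
    numPartitions n = numEvenPartitions n + numOddPartitions n := by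
  rw [numPartitions, numEvenPartitions, numOddPartitions, ← Fintype.card_sum]
  exact Fintype.card_congr <| (Equiv.sumCompl _).symm.trans <|
    (Equiv.refl _).sumCongr (Equiv.subtypeEquivRight fun _ => Nat.not_even_iff_odd)

theorem numEvenPartitions_le_succ (n : ℕ) : numEvenPartitions n ≤ numEvenPartitions (n + 1) :=
  Fintype.card_subtype_le_of_injective consOne consOne_injective fun q hq => by
    rwa [filter_even_consOne_parts]

theorem numOddPartitions_le_succ (n : ℕ) : numOddPartitions n ≤ numOddPartitions (n + 1) :=
  Fintype.card_subtype_le_of_injective consOne consOne_injective fun q hq => by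
    rwa [filter_even_consOne_parts]

theorem numOddPartitions_le_numEvenPartitions_succ (n : ℕ) :
    numOddPartitions (n + 1) ≤ numEvenPartitions (n + 2) :=
  Fintype.card_subtype_le_of_injective succLargestPart succLargestPart_injective fun q hq => by
    rwa [even_card_filter_even_succLargestPart_parts_iff, Nat.not_even_iff_odd]

theorem numEvenPartitions_le_numOddPartitions_succ (n : ℕ) :
    numEvenPartitions (n + 1) ≤ numOddPartitions (n + 2) :=
  Fintype.card_subtype_le_of_injective succLargestPart succLargestPart_injective fun q hq => by
    rwa [← Nat.not_even_iff_odd, even_card_filter_even_succLargestPart_parts_iff, not_not]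

/-- For every `n ≥ 2`, `P₀(n) ≥ P(n-1)/2` and `P₁(n) ≥ P(n-1)/2`. -/
theorem stmt17 (n : ℕ) (hn : 2 ≤ n) :
    numPartitions (n - 1) ≤ 2 * numEvenPartitions n ∧
    numPartitions (n - 1) ≤ 2 * numOddPartitions n := by
  obtain ⟨m, rfl⟩ : ∃ m, n = m + 2 := ⟨n - 2, by omega⟩
  rw [show m + 2 - 1 = m + 1 from rfl, numPartitions_eq_add, two_mul, two_mul]
  exact ⟨add_le_add (numEvenPartitions_le_succ _) (numOddPartitions_le_numEvenPartitions_succ m),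
    add_le_add (numEvenPartitions_le_numOddPartitions_succ m) (numOddPartitions_le_succ _)⟩

end
end

section
/- For $d \geq 2$ and $m \geq 1$, the boundary complex $\partial N^{d+1}_{m+d+1}$ is a stacked $d$-sphere, and $A_m = \{1, \ldots, d+1\}$ and $B_m = \{m+1, \ldots, m+d+1\}$ are two of its facets. -/
open Finset

noncomputable section

attribute [local instance] Classical.propDecidable

variable {V : Type} [DecidableEq V]

/-! Passing from `N^{d+1}_{m+d+1}` to `N^{d+1}_{m+d+2}` glues the simplex `{m+1, …, m+d+2}` onto
the boundary facet `B_m = {m+1, …, m+d+1}`: the boundary loses `B_m` and gains the faces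
`{m+1, …, m+d+2} \ {x}`, `x ∈ B_m`, which is exactly starring the new vertex `m+d+2` in `B_m`.
As `∂N^{d+1}_{d+2}` is the boundary of a single simplex, induction on `m` gives a stacked sphere. -/

def faceClosure (F : Finset (Finset V)) : Finset (Finset V) :=
  (F.biUnion powerset).filter fun s => s.Nonempty

lemma exists_insert_erase_eq_iff {B F : Finset V} {v : V} (hvB : v ∉ B) (hvF : v ∈ F) :
    (∃ x ∈ B, insert v (B.erase x) = F) ↔ F ⊆ insert v B ∧ F.card = B.card := by
  constructor
  · rintro ⟨x, hx, rfl⟩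
    refine ⟨insert_subset_insert v (erase_subset x B), ?_⟩
    rw [card_insert_of_notMem fun h => hvB (mem_of_mem_erase h), card_erase_of_mem hx]
    have := card_pos.2 ⟨x, hx⟩
    omega
  · rintro ⟨hFB, hcard⟩
    have hsub : F.erase v ⊆ B := subset_insert_iff.1 hFB
    have hlt : (F.erase v).card < B.card := by
      rw [card_erase_of_mem hvF, hcard]
      have := card_pos.2 ⟨v, hvF⟩
      omega
    obtain ⟨x, hx, hxF⟩ := exists_of_ssubset (lt_of_le_of_ne hsub (ne_of_apply_ne card hlt.ne))
    have hF : F.erase v = B.erase x := eq_of_subset_of_card_le (subset_erase.2 ⟨hsub, hxF⟩)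
      (by rw [card_erase_of_mem hx, card_erase_of_mem hvF, hcard])
    exact ⟨x, hx, by rw [← hF, insert_erase hvF]⟩

section FaceClosure

variable {F : Finset (Finset V)}

lemma mem_faceClosure {s : Finset V} :
    s ∈ faceClosure F ↔ s.Nonempty ∧ ∃ G ∈ F, s ⊆ G := by
  simp only [faceClosure, mem_filter, mem_biUnion, mem_powerset, and_comm]

lemma isFacet_faceClosure {σ : Finset V} (hσ : σ ∈ F) (hne : σ.Nonempty)
    (hmax : ∀ G ∈ F, G.card ≤ σ.card) : IsFacet (faceClosure F) σ := by
  refine ⟨mem_faceClosure.2 ⟨hne, σ, hσ, subset_rfl⟩, fun t ht hσt => ?_⟩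
  obtain ⟨-, G, hG, htG⟩ := mem_faceClosure.1 ht
  exact eq_of_subset_of_card_le hσt ((card_le_card htG).trans (hmax G hG))

lemma notMem_vertexSet_faceClosure {v : V} (hv : ∀ G ∈ F, v ∉ G) :
    v ∉ vertexSet (faceClosure F) := by
  simp only [vertexSet, mem_sup, id, not_exists, not_and]
  intro s hs hvs
  obtain ⟨-, G, hG, hsG⟩ := mem_faceClosure.1 hs
  exact hv G hG (hsG hvs)

lemma isStandardSphere_faceClosure_powersetCard {A : Finset V} {d : ℕ} (hA : A.card = d + 2) :
    IsStandardSphere (faceClosure (A.powersetCard (d + 1))) d := by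
  refine ⟨A, hA, Finset.ext fun s => ?_⟩
  simp only [mem_faceClosure, mem_powersetCard, mem_filter, mem_powerset]
  constructor
  · rintro ⟨hne, G, ⟨hGA, hG⟩, hsG⟩
    refine ⟨hsG.trans hGA, hne, fun hsA => ?_⟩
    have := card_le_card (hsA ▸ hsG)
    omega
  · rintro ⟨hsA, hne, hsA'⟩
    have hs : s.card ≤ d + 1 := by
      have := card_lt_card (lt_of_le_of_ne hsA hsA')
      omega
    obtain ⟨G, hsG, hGA, hG⟩ := exists_subsuperset_card_eq hsA hs (by omega)
    exact ⟨hne, G, ⟨hGA, hG⟩, hsG⟩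

lemma starringOf_faceClosure {σ : Finset V} {v : V} (hσ : σ ∈ F)
    (hfacet : IsFacet (faceClosure F) σ) (hv : v ∉ vertexSet (faceClosure F)) :
    StarringOf (faceClosure F)
      (faceClosure (F.erase σ ∪ σ.image fun x => insert v (σ.erase x))) := by
  refine ⟨σ, v, hfacet, hv, Finset.ext fun s => ?_⟩
  simp only [mem_union, mem_erase, mem_image, mem_filter, mem_powerset, mem_faceClosure]
  constructor
  · rintro ⟨hne, G, ⟨hGσ, hG⟩ | ⟨x, hx, rfl⟩, hsG⟩
    · refine Or.inl ⟨fun hsσ => hGσ ?_, hne, G, hG, hsG⟩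
      exact (hfacet.2 G (mem_faceClosure.2 ⟨hne.mono hsG, G, hG, subset_rfl⟩) (hsσ ▸ hsG)).symm
    · have hxs : x ∉ s.erase v := fun h => by simpa using subset_insert_iff.1 hsG h
      by_cases hvs : v ∈ s
      · refine Or.inr ⟨s.erase v, ⟨?_, fun h => hxs (h ▸ hx)⟩, insert_erase hvs⟩
        exact (subset_insert_iff.1 hsG).trans (erase_subset x σ)
      · rw [erase_eq_of_notMem hvs] at hxs
        refine Or.inl ⟨fun h => hxs (h ▸ hx), hne, σ, hσ, fun y hy => ?_⟩
        exact mem_of_mem_erase ((subset_insert_iff_of_notMem hvs).1 hsG hy)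
  · rintro (⟨hsσ, hne, G, hG, hsG⟩ | ⟨τ, ⟨hτσ, hτne⟩, rfl⟩)
    · refine ⟨hne, ?_⟩
      by_cases hGσ : G = σ
      · subst hGσ
        obtain ⟨x, hx, hxs⟩ := exists_of_ssubset (lt_of_le_of_ne hsG hsσ)
        exact ⟨_, Or.inr ⟨x, hx, rfl⟩, (subset_erase.2 ⟨hsG, hxs⟩).trans (subset_insert v _)⟩
      · exact ⟨G, Or.inl ⟨hGσ, hG⟩, hsG⟩
    · obtain ⟨x, hx, hxτ⟩ := exists_of_ssubset (lt_of_le_of_ne hτσ hτne)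
      exact ⟨insert_nonempty v τ, _, Or.inr ⟨x, hx, rfl⟩,
        insert_subset_insert v (subset_erase.2 ⟨hτσ, hxτ⟩)⟩

end FaceClosure

section BoundaryN

variable {d m : ℕ}

lemma boundaryN_eq_faceClosure (d m : ℕ) : boundaryN d m = faceClosure (boundaryNFacets d m) :=
  rfl

lemma mem_boundaryNFacets {F : Finset ℕ} :
    F ∈ boundaryNFacets d m ↔ F ⊆ Icc 1 (m + d + 1) ∧ F.card = d + 1 ∧
      ((Icc 1 m).filter fun k => F ⊆ Icc k (k + d + 1)).card = 1 := by
  simp only [boundaryNFacets, mem_filter, mem_powerset]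

lemma Icc_one_mem_boundaryNFacets (hm : 1 ≤ m) : Icc 1 (d + 1) ∈ boundaryNFacets d m := by
  refine mem_boundaryNFacets.2 ⟨Icc_subset_Icc le_rfl (by omega), by simp, ?_⟩
  rw [card_eq_one]
  refine ⟨1, Finset.ext fun k => ?_⟩
  simp only [mem_filter, mem_Icc, mem_singleton, Icc_subset_Icc_iff (by omega : 1 ≤ d + 1)]
  omega

lemma Icc_succ_mem_boundaryNFacets (hm : 1 ≤ m) :
    Icc (m + 1) (m + d + 1) ∈ boundaryNFacets d m := by
  refine mem_boundaryNFacets.2 ⟨Icc_subset_Icc (by omega) le_rfl, by rw [Nat.card_Icc]; omega, ?_⟩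
  rw [card_eq_one]
  refine ⟨m, Finset.ext fun k => ?_⟩
  simp only [mem_filter, mem_Icc, mem_singleton, Icc_subset_Icc_iff (by omega : m + 1 ≤ m + d + 1)]
  omega

lemma Icc_succ_notMem_boundaryNFacets_succ (hm : 1 ≤ m) :
    Icc (m + 1) (m + d + 1) ∉ boundaryNFacets d (m + 1) := by
  intro h
  have hwin : {m, m + 1} ⊆ (Icc 1 (m + 1)).filter fun k =>
      Icc (m + 1) (m + d + 1) ⊆ Icc k (k + d + 1) := by
    intro k hk
    simp only [mem_insert, mem_singleton] at hk
    simp only [mem_filter, mem_Icc, Icc_subset_Icc_iff (by omega : m + 1 ≤ m + d + 1)]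
    omega
  have := card_le_card hwin
  rw [card_pair (by omega), (mem_boundaryNFacets.1 h).2.2] at this
  omega

lemma isFacet_boundaryN {F : Finset ℕ} (hF : F ∈ boundaryNFacets d m) :
    IsFacet (boundaryN d m) F := by
  have hcard : ∀ G ∈ boundaryNFacets d m, G.card = d + 1 := fun G hG =>
    (mem_boundaryNFacets.1 hG).2.1
  exact isFacet_faceClosure hF (card_pos.1 (by rw [hcard F hF]; omega))
    fun G hG => by rw [hcard G hG, hcard F hF]

lemma boundaryNFacets_one (d : ℕ) :
    boundaryNFacets d 1 = (Icc 1 (d + 2)).powersetCard (d + 1) := by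
  ext F
  have hwin : F ⊆ Icc 1 (1 + d + 1) → ((Icc 1 1).filter fun k => F ⊆ Icc k (k + d + 1)) = {1} :=
    fun h => by rw [Icc_self, filter_singleton, if_pos h]
  rw [mem_boundaryNFacets, mem_powersetCard, show 1 + d + 1 = d + 2 by omega]
  constructor
  · exact fun ⟨hsub, hcard, _⟩ => ⟨hsub, hcard⟩
  · rintro ⟨hsub, hcard⟩
    rw [hwin (by rwa [show 1 + d + 1 = d + 2 by omega]), card_singleton]
    exact ⟨hsub, hcard, rfl⟩

lemma mem_boundaryNFacets_succ_of_mem {F : Finset ℕ} (hv : m + d + 2 ∈ F) :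
    F ∈ boundaryNFacets d (m + 1) ↔ F ⊆ Icc (m + 1) (m + d + 2) ∧ F.card = d + 1 := by
  rw [mem_boundaryNFacets]
  constructor
  · rintro ⟨-, hcard, hwin⟩
    obtain ⟨k, hk⟩ := card_pos.1 (hwin ▸ Nat.one_pos)
    obtain ⟨hk, hFk⟩ := mem_filter.1 hk
    have := mem_Icc.1 hk
    have := mem_Icc.1 (hFk hv)
    exact ⟨hFk.trans (Icc_subset_Icc (by omega) (by omega)), hcard⟩
  · rintro ⟨hsub, hcard⟩
    refine ⟨hsub.trans (Icc_subset_Icc (by omega) (by omega)), hcard, card_eq_one.2 ⟨m + 1, ?_⟩⟩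
    ext k
    simp only [mem_filter, mem_Icc, mem_singleton]
    constructor
    · rintro ⟨hk, hFk⟩
      have := mem_Icc.1 (hFk hv)
      omega
    · rintro rfl
      exact ⟨by omega, hsub.trans (Icc_subset_Icc le_rfl (by omega))⟩

lemma mem_boundaryNFacets_succ_of_notMem (hm : 1 ≤ m) {F : Finset ℕ} (hv : m + d + 2 ∉ F) :
    F ∈ boundaryNFacets d (m + 1) ↔
      F ∈ boundaryNFacets d m ∧ F ≠ Icc (m + 1) (m + d + 1) := by
  by_cases hFB : F = Icc (m + 1) (m + d + 1)
  · subst hFB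
    simpa using Icc_succ_notMem_boundaryNFacets_succ hm
  have hsub_iff : F ⊆ Icc 1 (m + 1 + d + 1) ↔ F ⊆ Icc 1 (m + d + 1) := by
    refine ⟨fun h x hx => ?_, fun h => h.trans (Icc_subset_Icc le_rfl (by omega))⟩
    have := mem_Icc.1 (h hx)
    have : x ≠ m + d + 2 := fun hx' => hv (hx' ▸ hx)
    exact mem_Icc.2 (by omega)
  have hnot : F.card = d + 1 → ¬ F ⊆ Icc (m + 1) (m + 1 + d + 1) := fun hcard h => by
    refine hFB (eq_of_subset_of_card_le (fun x hx => ?_) (by rw [Nat.card_Icc]; omega))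
    have := mem_Icc.1 (h hx)
    have : x ≠ m + d + 2 := fun hx' => hv (hx' ▸ hx)
    exact mem_Icc.2 (by omega)
  rw [mem_boundaryNFacets, mem_boundaryNFacets, hsub_iff,
    ← insert_Icc_right_eq_Icc_add_one (a := 1) (b := m) (by omega), filter_insert]
  constructor
  · rintro ⟨hsub, hcard, hwin⟩
    rw [if_neg (hnot hcard)] at hwin
    exact ⟨⟨hsub, hcard, hwin⟩, hFB⟩
  · rintro ⟨⟨hsub, hcard, hwin⟩, -⟩
    rw [if_neg (hnot hcard)]
    exact ⟨hsub, hcard, hwin⟩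

lemma boundaryNFacets_succ (hm : 1 ≤ m) :
    boundaryNFacets d (m + 1) =
      (boundaryNFacets d m).erase (Icc (m + 1) (m + d + 1)) ∪
        (Icc (m + 1) (m + d + 1)).image fun x =>
          insert (m + d + 2) ((Icc (m + 1) (m + d + 1)).erase x) := by
  ext F
  rw [mem_union, mem_erase, mem_image]
  by_cases hv : m + d + 2 ∈ F
  · have hold : F ∉ boundaryNFacets d m := fun h => by
      have := mem_Icc.1 ((mem_boundaryNFacets.1 h).1 hv)
      omega
    have hIcc : insert (m + d + 2) (Icc (m + 1) (m + d + 1)) = Icc (m + 1) (m + d + 2) :=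
      insert_Icc_right_eq_Icc_add_one (by omega)
    rw [mem_boundaryNFacets_succ_of_mem hv, exists_insert_erase_eq_iff (by simp) hv, hIcc,
      Nat.card_Icc, show m + d + 1 + 1 - (m + 1) = d + 1 by omega]
    simp only [hold, and_false, false_or]
  · have hnew : ∀ x, insert (m + d + 2) ((Icc (m + 1) (m + d + 1)).erase x) ≠ F :=
      fun x h => hv (h ▸ mem_insert_self _ _)
    simp only [mem_boundaryNFacets_succ_of_notMem hm hv, hnew, false_and, exists_false, or_false,
      and_comm]

lemma starringOf_boundaryN_succ (hm : 1 ≤ m) :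
    StarringOf (boundaryN d m) (boundaryN d (m + 1)) := by
  rw [boundaryN_eq_faceClosure, boundaryN_eq_faceClosure, boundaryNFacets_succ hm]
  refine starringOf_faceClosure (Icc_succ_mem_boundaryNFacets hm)
    (isFacet_boundaryN (Icc_succ_mem_boundaryNFacets hm)) (notMem_vertexSet_faceClosure ?_)
  intro G hG hv
  have := mem_Icc.1 ((mem_boundaryNFacets.1 hG).1 hv)
  omega

lemma isStackedSphere_boundaryN (hm : 1 ≤ m) : IsStackedSphere (boundaryN d m) d := by
  refine ⟨boundaryN d 1, ?_, ?_⟩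
  · rw [boundaryN_eq_faceClosure, boundaryNFacets_one]
    exact isStandardSphere_faceClosure_powersetCard (by rw [Nat.card_Icc]; omega)
  · induction m, hm using Nat.le_induction with
    | base => exact .refl
    | succ n hn ih => exact ih.tail (starringOf_boundaryN_succ hn)

end BoundaryN

theorem stmt18_general (d m : ℕ) (hm : 1 ≤ m) :
    IsStackedSphere (boundaryN d m) d ∧
    IsFacet (boundaryN d m) (Finset.Icc 1 (d + 1)) ∧
    IsFacet (boundaryN d m) (Finset.Icc (m + 1) (m + d + 1)) :=
  ⟨isStackedSphere_boundaryN hm, isFacet_boundaryN (Icc_one_mem_boundaryNFacets hm),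
    isFacet_boundaryN (Icc_succ_mem_boundaryNFacets hm)⟩

/-- For `d ≥ 2` and `m ≥ 1`, the boundary complex `∂N^{d+1}_{m+d+1}` is a stacked
`d`-sphere, and `A_m = {1, …, d+1}` and `B_m = {m+1, …, m+d+1}` are two of its facets. -/
theorem stmt18 (d m : ℕ) (hd : 2 ≤ d) (hm : 1 ≤ m) :
    IsStackedSphere (boundaryN d m) d ∧
    IsFacet (boundaryN d m) (Finset.Icc 1 (d + 1)) ∧
    IsFacet (boundaryN d m) (Finset.Icc (m + 1) (m + d + 1)) :=
  stmt18_general d m hm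

end
end

section
/- Let $d \geq 2$ and $m \geq 1$. A vertex $x \in B_m$ and a vertex $y \in A_m$ are at distance at least $3$ in the edge graph of $\partial N^{d+1}_{m+d+1}$ if and only if $x - y \geq 2d+3$. Consequently, a bijection $\psi: B_m \to A_m$ is admissible if and only if $x - \psi(x) \geq 2d+3$ for all $x \in B_m$; in particular, no admissible bijection $\psi: B_m \to A_m$ exists when $m \leq 2d+2$, and when $m = 2d+3$ the map $\psi_0$ given by $\psi_0(m+i) = i$ ($1 \leq i \leq d+1$) is the unique admissible bijection from $B_m$ to $A_m$. -/
open Finset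

noncomputable section

attribute [local instance] Classical.propDecidable

variable {V : Type} [DecidableEq V]

/-! The faces of `∂N^{d+1}_{m+d+1}` are the nonempty sets lying in a window `[k, k+d+1]`, and
since `d ≥ 2` every pair of vertices at distance at most `d+1` already lies in a boundary facet.
So two vertices are adjacent exactly when they differ by at most `d+1`, and `x ∈ B_m`, `y ∈ A_m`
are at distance at least `3` exactly when `x - y ≥ 2d+3`. For `m = 2d+3` an admissible `ψ`
satisfies `ψ x ≤ x - m` on `B_m`; both sides are bijections onto `A_m`, so their sums agree and
the inequality is an equality. -/

section BoundaryN

variable {d m : ℕ}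

lemma mem_boundaryN_iff {t : Finset ℕ} :
    t ∈ boundaryN d m ↔ t.Nonempty ∧ ∃ s ∈ boundaryNFacets d m, t ⊆ s := by
  simp only [boundaryN, mem_filter, mem_biUnion, mem_powerset]
  tauto

lemma card_eq_of_mem_boundaryNFacets {s : Finset ℕ} (hs : s ∈ boundaryNFacets d m) :
    s.card = d + 1 :=
  (mem_filter.mp hs).2.1

lemma exists_window_of_mem_boundaryN {t : Finset ℕ} (ht : t ∈ boundaryN d m) :
    ∃ k ∈ Icc 1 m, t ⊆ Icc k (k + d + 1) := by
  obtain ⟨-, s, hs, hts⟩ := mem_boundaryN_iff.mp ht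
  obtain ⟨k, hk⟩ := card_eq_one.mp (mem_filter.mp hs).2.2
  have hk_mem := mem_filter.mp (hk ▸ mem_singleton_self k)
  exact ⟨k, hk_mem.1, hts.trans hk_mem.2⟩

/-- `hleft` rules out every window further left and `hright` every window further right. -/
lemma mem_boundaryNFacets_of_subset_window {k : ℕ} {s : Finset ℕ} (hk : k ∈ Icc 1 m)
    (hs : s ⊆ Icc k (k + d + 1)) (hcard : s.card = d + 1)
    (hleft : k = 1 ∨ k + d + 1 ∈ s) (hright : k = m ∨ k ∈ s) :
    s ∈ boundaryNFacets d m := by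
  rw [mem_Icc] at hk
  refine mem_filter.mpr ⟨mem_powerset.mpr fun x hx => ?_, hcard, card_eq_one.mpr ⟨k, ?_⟩⟩
  · have := mem_Icc.mp (hs hx)
    rw [mem_Icc]
    omega
  · ext k'
    simp only [mem_filter, mem_Icc, mem_singleton]
    constructor
    · rintro ⟨hk', hsk'⟩
      have hk'_le : k' ≤ k := by
        rcases hright with rfl | hks
        · exact hk'.2
        · exact (mem_Icc.mp (hsk' hks)).1
      have hk_le : k ≤ k' := by
        rcases hleft with rfl | hks
        · exact hk'.1
        · have := (mem_Icc.mp (hsk' hks)).2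
          omega
      omega
    · rintro rfl
      exact ⟨hk, hs⟩

lemma isFacet_of_mem_boundaryNFacets {s : Finset ℕ} (hs : s ∈ boundaryNFacets d m) :
    IsFacet (boundaryN d m) s := by
  have hcard := card_eq_of_mem_boundaryNFacets hs
  refine ⟨mem_boundaryN_iff.mpr ⟨card_pos.mp (by omega), s, hs, subset_rfl⟩,
    fun t ht hst => ?_⟩
  obtain ⟨-, s', hs', hts'⟩ := mem_boundaryN_iff.mp ht
  have hss' : s = s' :=
    eq_of_subset_of_card_le (hst.trans hts') (by rw [card_eq_of_mem_boundaryNFacets hs', hcard])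
  exact hst.antisymm (hss' ▸ hts')

/-- Take the leftmost window containing `b`; since it has `d + 2 ≥ 4` elements, one of them
other than `a`, `b` and its left end can be dropped, leaving a boundary facet through `a, b`. -/
lemma edgeGraph_boundaryN_adj_of_le (hd : 2 ≤ d) (hm : 1 ≤ m) {a b : ℕ} (ha : 1 ≤ a)
    (hab : a < b) (hb : b ≤ m + d + 1) (hba : b ≤ a + d + 1) :
    (edgeGraph (boundaryN d m)).Adj a b := by
  set k := max 1 (b - (d + 1))
  have hwindow : (Icc k (k + d + 1)).card = d + 2 := by
    rw [Nat.card_Icc]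
    omega
  obtain ⟨e, he, hek⟩ := exists_mem_notMem_of_card_lt_card
    (s := {k, a, b}) (t := Icc k (k + d + 1)) (card_le_three.trans_lt (by omega))
  have hmem : ∀ x ∈ ({k, a, b} : Finset ℕ), x ∈ (Icc k (k + d + 1)).erase e := by
    intro x hx
    refine mem_erase.mpr ⟨fun hxe => hek (hxe ▸ hx), mem_Icc.mpr ?_⟩
    simp only [mem_insert, mem_singleton] at hx
    omega
  have hfacet : (Icc k (k + d + 1)).erase e ∈ boundaryNFacets d m := by
    refine mem_boundaryNFacets_of_subset_window (mem_Icc.mpr ⟨le_max_left _ _, by omega⟩)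
      (erase_subset _ _) (by rw [card_erase_of_mem he, hwindow]; rfl) ?_
      (Or.inr (hmem k (by simp)))
    by_cases hk : k = 1
    · exact Or.inl hk
    · exact Or.inr (by convert hmem b (by simp) using 1; omega)
  refine ⟨hab.ne, mem_boundaryN_iff.mpr ⟨insert_nonempty _ _, _, hfacet, ?_⟩⟩
  intro x hx
  exact hmem x (by simp only [mem_insert, mem_singleton] at hx ⊢; omega)

lemma le_add_of_edgeGraph_boundaryN_adj {a b : ℕ} (h : (edgeGraph (boundaryN d m)).Adj a b) :
    b ≤ a + d + 1 := by
  obtain ⟨k, -, hk⟩ := exists_window_of_mem_boundaryN h.2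
  have ha := mem_Icc.mp (hk (mem_insert_self a _))
  have hb := mem_Icc.mp (hk (mem_insert_of_mem (mem_singleton_self b)))
  omega

theorem farApart_boundaryN_iff (hd : 2 ≤ d) (hm : 1 ≤ m) {x y : ℕ}
    (hx : x ∈ Icc (m + 1) (m + d + 1)) (hy : y ∈ Icc 1 (d + 1)) :
    farApart (edgeGraph (boundaryN d m)) x y ↔ 2 * d + 3 ≤ x - y := by
  rw [mem_Icc] at hx hy
  have adj_of_le {a b : ℕ} := edgeGraph_boundaryN_adj_of_le hd hm (a := a) (b := b)
  constructor
  · rintro ⟨hne, hnadj, hnpath⟩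
    by_contra hclose
    rcases lt_or_gt_of_ne hne with hxy | hxy
    · exact hnadj (adj_of_le (by omega) hxy (by omega) (by omega))
    by_cases hnear : x ≤ y + d + 1
    · exact hnadj (adj_of_le hy.1 hxy hx.2 hnear).symm
    · exact hnpath (y + d + 1)
        ⟨(adj_of_le (by omega) (by omega) hx.2 (by omega)).symm,
          (adj_of_le hy.1 (by omega) (by omega) le_rfl).symm⟩
  · intro hfar
    refine ⟨by omega, fun hadj => ?_, fun z ⟨hxz, hzy⟩ => ?_⟩
    · have := le_add_of_edgeGraph_boundaryN_adj hadj.symm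
      omega
    · have := le_add_of_edgeGraph_boundaryN_adj hxz.symm
      have := le_add_of_edgeGraph_boundaryN_adj hzy.symm
      omega

theorem admissible_boundaryN_iff (hd : 2 ≤ d) (hm : 1 ≤ m) {ψ : ℕ → ℕ}
    (hψ : Set.BijOn ψ ↑(Icc (m + 1) (m + d + 1)) ↑(Icc 1 (d + 1))) :
    Admissible (boundaryN d m) (Icc (m + 1) (m + d + 1)) (Icc 1 (d + 1)) ψ ↔
      ∀ x ∈ Icc (m + 1) (m + d + 1), 2 * d + 3 ≤ x - ψ x := by
  have hmaps (x) (hx : x ∈ Icc (m + 1) (m + d + 1)) : ψ x ∈ Icc 1 (d + 1) := hψ.mapsTo hx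
  refine ⟨fun hadm x hx =>
      (farApart_boundaryN_iff hd hm hx (hmaps x hx)).mp (hadm.2.2.2.2 x hx),
    fun hfar => ⟨isFacet_of_mem_boundaryNFacets (Icc_succ_mem_boundaryNFacets hm),
      isFacet_of_mem_boundaryNFacets (Icc_one_mem_boundaryNFacets hm), ?_, hψ,
      fun x hx => (farApart_boundaryN_iff hd hm hx (hmaps x hx)).mpr (hfar x hx)⟩⟩
  have hstart : m + 1 ∈ Icc (m + 1) (m + d + 1) := mem_Icc.mpr ⟨le_rfl, by omega⟩
  have := hfar _ hstart
  have := mem_Icc.mp (hmaps _ hstart)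
  exact disjoint_left.mpr fun a ha hb => by rw [mem_Icc] at ha hb; omega

end BoundaryN

lemma bijOn_sub_Icc (m a b : ℕ) :
    Set.BijOn (fun x => x - m) ↑(Icc (m + a) (m + b)) ↑(Icc a b) := by
  simp only [coe_Icc]
  refine ⟨fun x hx => ?_, fun x hx y hy hxy => ?_, fun y hy => ⟨y + m, ?_, ?_⟩⟩ <;>
    simp only [Set.mem_Icc] at * <;> omega

lemma Set.BijOn.eqOn_of_le {α : Type*} {s : Finset α} {t : Finset ℕ} {f g : α → ℕ}
    (hf : Set.BijOn f s t) (hg : Set.BijOn g s t) (hle : ∀ x ∈ s, f x ≤ g x) :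
    Set.EqOn f g s := by
  have hsum (h : α → ℕ) (hh : Set.BijOn h s t) : ∑ x ∈ s, h x = ∑ y ∈ t, y :=
    sum_nbij h (fun x hx => hh.mapsTo hx) hh.injOn hh.surjOn fun _ _ => rfl
  exact fun x hx => (sum_eq_sum_iff_of_le hle).mp ((hsum f hf).trans (hsum g hg).symm) x hx

/-- For `d ≥ 2`, `m ≥ 1`: a vertex `x ∈ B_m` and a vertex `y ∈ A_m` are at distance at
least 3 in the edge graph of `∂N^{d+1}_{m+d+1}` iff `x - y ≥ 2d+3`; a bijection
`ψ : B_m → A_m` is admissible iff `x - ψ x ≥ 2d+3` for all `x ∈ B_m`; in particular no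
admissible bijection exists when `m ≤ 2d+2`, and for `m = 2d+3` the map `x ↦ x - m` is
the unique admissible bijection from `B_m` to `A_m`. -/
theorem stmt19 (d m : ℕ) (hd : 2 ≤ d) (hm : 1 ≤ m) :
    (∀ x ∈ Finset.Icc (m + 1) (m + d + 1), ∀ y ∈ Finset.Icc 1 (d + 1),
      (farApart (edgeGraph (boundaryN d m)) x y ↔ 2 * d + 3 ≤ x - y)) ∧
    (∀ ψ : ℕ → ℕ,
      Set.BijOn ψ ↑(Finset.Icc (m + 1) (m + d + 1)) ↑(Finset.Icc 1 (d + 1)) →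
      (Admissible (boundaryN d m) (Finset.Icc (m + 1) (m + d + 1))
          (Finset.Icc 1 (d + 1)) ψ ↔
        ∀ x ∈ Finset.Icc (m + 1) (m + d + 1), 2 * d + 3 ≤ x - ψ x)) ∧
    (m ≤ 2 * d + 2 → ∀ ψ : ℕ → ℕ,
      ¬ Admissible (boundaryN d m) (Finset.Icc (m + 1) (m + d + 1))
          (Finset.Icc 1 (d + 1)) ψ) ∧
    (m = 2 * d + 3 →
      Admissible (boundaryN d m) (Finset.Icc (m + 1) (m + d + 1))
        (Finset.Icc 1 (d + 1)) (fun x => x - m) ∧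
      ∀ ψ : ℕ → ℕ,
        Admissible (boundaryN d m) (Finset.Icc (m + 1) (m + d + 1))
          (Finset.Icc 1 (d + 1)) ψ →
        ∀ x ∈ Finset.Icc (m + 1) (m + d + 1), ψ x = x - m) := by
  have hB : Icc (m + 1) (m + d + 1) = Icc (m + 1) (m + (d + 1)) := by rw [add_assoc]
  refine ⟨fun x hx y hy => farApart_boundaryN_iff hd hm hx hy,
    fun ψ hψ => admissible_boundaryN_iff hd hm hψ, fun hsmall ψ hadm => ?_, fun hm' => ?_⟩
  · have hψ := hadm.2.2.2.1
    have hstart : m + 1 ∈ Icc (m + 1) (m + d + 1) := mem_Icc.mpr ⟨le_rfl, by omega⟩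
    have := (admissible_boundaryN_iff hd hm hψ).mp hadm _ hstart
    have := mem_Icc.mp (hψ.mapsTo hstart)
    omega
  · have hψ₀ : Set.BijOn (fun x => x - m) ↑(Icc (m + 1) (m + d + 1)) ↑(Icc 1 (d + 1)) :=
      hB ▸ bijOn_sub_Icc m 1 (d + 1)
    refine ⟨(admissible_boundaryN_iff hd hm hψ₀).mpr fun x hx => ?_, fun ψ hadm => ?_⟩
    · rw [mem_Icc] at hx
      omega
    · have hψ := hadm.2.2.2.1
      refine fun x hx => hψ.eqOn_of_le hψ₀ (fun y hy => ?_) hx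
      have := (admissible_boundaryN_iff hd hm hψ).mp hadm y hy
      omega

end
end
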